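/- Let f : ℝⁿ → ℝ be convex, differentiable, and L-smooth with minimizer x*. Let ξ ≥ 1, T ≥ 0, λ_k = (k + 2ξ + T)/2, and 0 < s ≤ 1/L. Consider the iteration y_k = x_k + (ξ/(λ_k + ξ − 1))·(z_k − x_k), x_{k+1} = y_k − s·∇f(y_k), z_{k+1} = z_k − (s·λ_k/ξ)·∇f(y_k), started from x_0 = z_0. Define φ_k = s·λ_{k−1}²·(f(x_k) − f(x*)) + (ξ²/2)·‖z_k − x*‖². Then φ_{k+1} ≤ φ_k for all k ≥ 0. -/

import Mathlib

/-!
Write `g = ∇f(y)`. The gradient step lowers `f` by at least `s/2 ‖g‖²` (descent lemma, `L s ≤ 1`),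
and this exactly pays for the term `s²λ²/2 ‖g‖²` produced by expanding `ξ²/2 ‖z' − x*‖²`.
The choice of `y` gives the coupling `ξ (z − x*) = (λ − 1)(y − x) + ξ (y − x*)`, so the
remaining cross term is `−sλ((λ−1)⟪g, y − x⟫ + ξ⟪g, y − x*⟫)`, which the two gradient
inequalities of convexity at `y` (against `x` and against `x*`) bound by `f`-values. What is
left is `sλ(1 − ξ)(f y − f x*) + s(λ(λ−1) − (λ−½)²)(f x − f x*) ≤ 0`.
-/

open RealInnerProductSpace Set

section

variable {E : Type*} [NormedAddCommGroup E] [InnerProductSpace ℝ E] [CompleteSpace E]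
  {f : E → ℝ}

theorem HasGradientAt.hasDerivAt_comp_lineMap {g x y : E} {t : ℝ}
    (h : HasGradientAt f g (AffineMap.lineMap x y t)) :
    HasDerivAt (fun t : ℝ => f (AffineMap.lineMap x y t)) ⟪g, y - x⟫ t :=
  h.hasFDerivAt.comp_hasDerivAt t AffineMap.hasDerivAt_lineMap

theorem ConvexOn.add_inner_gradient_le (hf : ConvexOn ℝ univ f) {g x : E}
    (hg : HasGradientAt f g x) (y : E) : f x + ⟪g, y - x⟫ ≤ f y := by
  have hline : ConvexOn ℝ univ (fun t : ℝ => f (AffineMap.lineMap x y t)) :=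
    hf.comp_affineMap (AffineMap.lineMap x y)
  have hderiv := HasGradientAt.hasDerivAt_comp_lineMap (y := y) (t := 0) (by simpa using hg)
  have := hline.le_slope_of_hasDerivAt (mem_univ 0) (mem_univ 1) zero_lt_one hderiv
  rw [slope_def_field, AffineMap.lineMap_apply_one, AffineMap.lineMap_apply_zero, sub_zero,
    div_one] at this
  linarith

variable {f' : E → E} {L : ℝ}

theorem le_add_inner_add_of_lipschitz_gradient (hf : ∀ x, HasGradientAt f (f' x) x)
    (hL : ∀ x y, ‖f' x - f' y‖ ≤ L * ‖x - y‖) (x y : E) :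
    f y ≤ f x + ⟪f' x, y - x⟫ + L / 2 * ‖y - x‖ ^ 2 := by
  set v := y - x
  let h : ℝ → ℝ := fun t =>
    f (AffineMap.lineMap x y t) - t * ⟪f' x, v⟫ - L / 2 * t ^ 2 * ‖v‖ ^ 2
  have hderiv (t : ℝ) :
      HasDerivAt h (⟪f' (AffineMap.lineMap x y t) - f' x, v⟫ - L * t * ‖v‖ ^ 2) t := by
    have := (((hf (AffineMap.lineMap x y t)).hasDerivAt_comp_lineMap).sub
      ((hasDerivAt_id t).mul_const ⟪f' x, v⟫)).sub
        (((hasDerivAt_pow 2 t).const_mul (L / 2)).mul_const (‖v‖ ^ 2))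
    refine this.congr_deriv ?_
    simp only [inner_sub_left, v]
    ring
  have hanti : AntitoneOn h (Ici 0) := by
    refine antitoneOn_of_hasDerivWithinAt_nonpos (convex_Ici 0)
      (fun t _ => (hderiv t).continuousAt.continuousWithinAt)
      (fun t _ => (hderiv t).hasDerivWithinAt) fun t ht => ?_
    rw [interior_Ici] at ht
    have hdist : ‖AffineMap.lineMap x y t - x‖ = t * ‖v‖ := by
      rw [AffineMap.lineMap_apply_module', add_sub_cancel_right, norm_smul,
        Real.norm_of_nonneg ht.le]
    calc ⟪f' (AffineMap.lineMap x y t) - f' x, v⟫ - L * t * ‖v‖ ^ 2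
        ≤ ‖f' (AffineMap.lineMap x y t) - f' x‖ * ‖v‖ - L * t * ‖v‖ ^ 2 := by
          gcongr; exact real_inner_le_norm _ _
      _ ≤ L * (t * ‖v‖) * ‖v‖ - L * t * ‖v‖ ^ 2 := by
          gcongr; exact hdist ▸ hL _ _
      _ = 0 := by ring
  have := hanti (mem_Ici.2 le_rfl) (mem_Ici.2 zero_le_one) zero_le_one
  simp only [h, AffineMap.lineMap_apply_one, AffineMap.lineMap_apply_zero, one_mul, one_pow,
    mul_one, zero_mul, sub_zero, ne_eq, OfNat.ofNat_ne_zero, not_false_eq_true, zero_pow,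
    mul_zero] at this
  linarith

theorem gradient_step_le (hf : ∀ x, HasGradientAt f (f' x) x)
    (hL : ∀ x y, ‖f' x - f' y‖ ≤ L * ‖x - y‖) {s : ℝ} (hs : 0 ≤ s) (hsL : L * s ≤ 1) (y : E) :
    f (y - s • f' y) ≤ f y - s / 2 * ‖f' y‖ ^ 2 := by
  have := le_add_inner_add_of_lipschitz_gradient hf hL y (y - s • f' y)
  rw [sub_sub_cancel_left, inner_neg_right, real_inner_smul_right, real_inner_self_eq_norm_sq,
    norm_neg, norm_smul, Real.norm_of_nonneg hs] at this
  nlinarith [mul_nonneg (sub_nonneg.2 hsL) (mul_nonneg hs (sq_nonneg ‖f' y‖))]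

theorem potential_step_le (hf : ∀ x, HasGradientAt f (f' x) x) (hconv : ConvexOn ℝ univ f)
    (hL : ∀ x y, ‖f' x - f' y‖ ≤ L * ‖x - y‖) {xstar : E} (hmin : ∀ y, f xstar ≤ f y)
    {ξ l s : ℝ} (hξ : 1 ≤ ξ) (hξl : ξ ≤ l) (hs : 0 < s) (hsL : L * s ≤ 1) {x y z : E}
    (hy : y = x + (ξ / (l + ξ - 1)) • (z - x)) :
    s * l ^ 2 * (f (y - s • f' y) - f xstar) + ξ ^ 2 / 2 * ‖z - (s * l / ξ) • f' y - xstar‖ ^ 2 ≤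
      s * (l - 1 / 2) ^ 2 * (f x - f xstar) + ξ ^ 2 / 2 * ‖z - xstar‖ ^ 2 := by
  set g := f' y
  have hξ0 : 0 < ξ := by linarith
  have hcoupling : ξ • (z - xstar) = (1 - l) • (x - y) - ξ • (xstar - y) := by
    have hc : (l + ξ - 1) * (ξ / (l + ξ - 1)) = ξ := mul_div_cancel₀ ξ (by linarith)
    calc ξ • (z - xstar) = ((l + ξ - 1) * (ξ / (l + ξ - 1))) • (z - x) + ξ • (x - xstar) := by
          rw [hc]; module
      _ = _ := by rw [hy]; module
  have hnorm : ξ ^ 2 / 2 * ‖z - (s * l / ξ) • g - xstar‖ ^ 2 = ξ ^ 2 / 2 * ‖z - xstar‖ ^ 2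
      - s * l * ((1 - l) * ⟪g, x - y⟫ - ξ * ⟪g, xstar - y⟫) + s ^ 2 * l ^ 2 / 2 * ‖g‖ ^ 2 := by
    have : ⟪z - xstar, g⟫ = ((1 - l) * ⟪g, x - y⟫ - ξ * ⟪g, xstar - y⟫) / ξ := by
      rw [eq_div_iff hξ0.ne', mul_comm, ← real_inner_smul_left, hcoupling, inner_sub_left,
        real_inner_smul_left, real_inner_smul_left, real_inner_comm g, real_inner_comm g]
    rw [sub_right_comm, norm_sub_sq_real, real_inner_smul_right, this, norm_smul,
      Real.norm_eq_abs, mul_pow, sq_abs]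
    field_simp
  have hstep := gradient_step_le hf hL hs.le hsL y
  have hx := hconv.add_inner_gradient_le (hf y) x
  have hxstar := hconv.add_inner_gradient_le (hf y) xstar
  have hl0 : 0 ≤ l := by linarith
  rw [hnorm]
  nlinarith [mul_le_mul_of_nonneg_left hstep (by positivity : 0 ≤ s * l ^ 2),
    mul_le_mul_of_nonneg_left hx (mul_nonneg (mul_nonneg hs.le hl0) (by linarith : 0 ≤ l - 1)),
    mul_le_mul_of_nonneg_left hxstar (by positivity : 0 ≤ s * l * ξ),
    mul_nonneg (mul_nonneg (mul_nonneg hs.le hl0) (by linarith : 0 ≤ ξ - 1))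
      (sub_nonneg.2 (hmin y)),
    mul_nonneg hs.le (sub_nonneg.2 (hmin x))]

end

theorem stmt_9_general (n : ℕ) (f : EuclideanSpace ℝ (Fin n) → ℝ)
    (f' : EuclideanSpace ℝ (Fin n) → EuclideanSpace ℝ (Fin n))
    (hgrad : ∀ x, HasGradientAt f (f' x) x)
    (hconv : ConvexOn ℝ Set.univ f)
    (L : ℝ) (hlip : ∀ x y, ‖f' x - f' y‖ ≤ L * ‖x - y‖)
    (xstar : EuclideanSpace ℝ (Fin n)) (hmin : ∀ y, f xstar ≤ f y)
    (ξ T : ℝ) (hξ : 1 ≤ ξ) (hT : 0 ≤ T)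
    (lam : ℤ → ℝ) (hlam : ∀ k : ℤ, lam k = ((k : ℝ) + 2 * ξ + T) / 2)
    (s : ℝ) (hs0 : 0 < s) (hsL : s ≤ 1 / L)
    (x y z : ℕ → EuclideanSpace ℝ (Fin n))
    (hy : ∀ k, y k = x k + (ξ / (lam k + ξ - 1)) • (z k - x k))
    (hx : ∀ k, x (k + 1) = y k - s • f' (y k))
    (hz : ∀ k, z (k + 1) = z k - (s * lam k / ξ) • f' (y k))
    (φ : ℕ → ℝ)
    (hφ : ∀ k : ℕ, φ k =
      s * lam ((k : ℤ) - 1) ^ 2 * (f (x k) - f xstar) + ξ ^ 2 / 2 * ‖z k - xstar‖ ^ 2) :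
    ∀ k, φ (k + 1) ≤ φ k := by
  have hL : 0 < L := by
    by_contra! hL
    linarith [one_div_nonpos.2 hL]
  have hLs : L * s ≤ 1 := by rwa [le_div_iff₀ hL, mul_comm] at hsL
  intro k
  have hlam_succ : lam (((k + 1 : ℕ) : ℤ) - 1) = lam k := by push_cast; simp
  have hlam_pred : lam ((k : ℤ) - 1) = lam k - 1 / 2 := by rw [hlam, hlam]; push_cast; ring
  have hξl : ξ ≤ lam k := by rw [hlam]; push_cast; linarith [(k.cast_nonneg : (0 : ℝ) ≤ k)]
  rw [hφ, hφ, hlam_succ, hlam_pred, hx, hz]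
  exact potential_step_le hgrad hconv hlip hmin hξ hξl hs0 hLs (hy k)

theorem stmt_9 (n : ℕ) (f : EuclideanSpace ℝ (Fin n) → ℝ)
    (f' : EuclideanSpace ℝ (Fin n) → EuclideanSpace ℝ (Fin n))
    (hgrad : ∀ x, HasGradientAt f (f' x) x)
    (hconv : ConvexOn ℝ Set.univ f)
    (L : ℝ) (hlip : ∀ x y, ‖f' x - f' y‖ ≤ L * ‖x - y‖)
    (xstar : EuclideanSpace ℝ (Fin n)) (hmin : ∀ y, f xstar ≤ f y)
    (ξ T : ℝ) (hξ : 1 ≤ ξ) (hT : 0 ≤ T)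
    (lam : ℤ → ℝ) (hlam : ∀ k : ℤ, lam k = ((k : ℝ) + 2 * ξ + T) / 2)
    (s : ℝ) (hs0 : 0 < s) (hsL : s ≤ 1 / L)
    (x y z : ℕ → EuclideanSpace ℝ (Fin n))
    (hinit : x 0 = z 0)
    (hy : ∀ k, y k = x k + (ξ / (lam k + ξ - 1)) • (z k - x k))
    (hx : ∀ k, x (k + 1) = y k - s • f' (y k))
    (hz : ∀ k, z (k + 1) = z k - (s * lam k / ξ) • f' (y k))
    (φ : ℕ → ℝ)
    (hφ : ∀ k : ℕ, φ k =
      s * lam ((k : ℤ) - 1) ^ 2 * (f (x k) - f xstar) + ξ ^ 2 / 2 * ‖z k - xstar‖ ^ 2) :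
    ∀ k, φ (k + 1) ≤ φ k :=
  stmt_9_general n f f' hgrad hconv L hlip xstar hmin ξ T hξ hT lam hlam s hs0 hsL x y z hy hx hz φ
    hφ
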